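/- arXiv:1708.00682 — 5 statements merged into one kernel-verified Lean document; each statement's English description precedes it below -/
import Mathlib

section
/- Suppose u ∈ C²[0,1] solves -ε u'' + μ a u' + b u = f on (0,1), where a, b, f are continuous with ‖a‖, ‖b‖, ‖f‖ denoting sup norms, 0 < ε ≤ 1, 0 ≤ μ ≤ 1. Then for any 0 < r ≤ 1/2, sup_{[0,1]} |u'| ≤ C (1/r + μ/ε + r/ε) ‖u‖ + (r/ε) ‖f‖, where C depends only on ‖a‖, ‖a'‖ (assuming a ∈ C¹) and ‖b‖. -/
/-!
Write the equation in conservation form: with the flux `F = ε u' - μ a u` it reads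
`F' = (b - μ a') u - f`, whose right-hand side involves no derivative of `u`. Around any point
`x` pick a window of length `r` inside `[0,1]`. The mean value theorem for `u` gives a point `y`
of the window with `|u'(y)| ≤ 2‖u‖/r`, and the mean value theorem for `F` gives
`|F(x) - F(y)| ≤ r ((‖b‖ + ‖a'‖)‖u‖ + ‖f‖)`. Since `ε u' = F + μ a u`, dividing by `ε` bounds
`u'(x)`.
-/

open Set

lemma exists_mem_Icc_add_subset_Icc {p q r x : ℝ} (hx : x ∈ Icc p q) (hr : 0 ≤ r)
    (hrq : r ≤ q - p) : ∃ α, Icc α (α + r) ⊆ Icc p q ∧ x ∈ Icc α (α + r) := by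
  refine ⟨min x (q - r), Icc_subset_Icc ?_ ?_, min_le_left _ _, ?_⟩
  · exact le_min hx.1 (by linarith)
  · linarith [min_le_right x (q - r)]
  · rcases le_total x (q - r) with h | h
    · rw [min_eq_left h]; linarith
    · rw [min_eq_right h]; linarith [hx.2]

lemma exists_abs_deriv_le_of_abs_le {u : ℝ → ℝ} {α β M : ℝ} (hαβ : α < β)
    (hc : ContinuousOn u (Icc α β)) (hd : DifferentiableOn ℝ u (Ioo α β))
    (hM : ∀ t ∈ Icc α β, |u t| ≤ M) : ∃ y ∈ Ioo α β, |deriv u y| ≤ 2 * M / (β - α) := by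
  obtain ⟨y, hy, hslope⟩ := exists_deriv_eq_slope u hαβ hc hd
  refine ⟨y, hy, ?_⟩
  have hdiff : |u β - u α| ≤ 2 * M := by
    have := abs_sub (u β) (u α)
    linarith [hM β ⟨hαβ.le, le_rfl⟩, hM α ⟨le_rfl, hαβ.le⟩]
  rw [hslope, abs_div, abs_of_pos (sub_pos.2 hαβ)]
  gcongr

lemma abs_sub_le_of_hasDerivAt_of_abs_le {F F' : ℝ → ℝ} {p q K x y : ℝ}
    (hc : ContinuousOn F (Icc p q)) (hd : ∀ t ∈ Ioo p q, HasDerivAt F (F' t) t)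
    (hK : ∀ t ∈ Ioo p q, |F' t| ≤ K) (hx : x ∈ Icc p q) (hy : y ∈ Icc p q) :
    |F x - F y| ≤ K * |x - y| := by
  wlog hyx : y < x generalizing x y
  · rcases (not_lt.1 hyx).lt_or_eq with h | rfl
    · rw [abs_sub_comm, abs_sub_comm x]
      exact this hy hx h
    · simp
  obtain ⟨c, hc, hslope⟩ := exists_hasDerivAt_eq_slope F F' hyx
    (hc.mono (Icc_subset_Icc hy.1 hx.2))
    (fun t ht => hd t ⟨hy.1.trans_lt ht.1, ht.2.trans_le hx.2⟩)
  rw [eq_div_iff (sub_ne_zero.2 hyx.ne')] at hslope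
  rw [← hslope, abs_mul]
  gcongr
  exact hK c ⟨hy.1.trans_lt hc.1, hc.2.trans_le hx.2⟩

noncomputable def flux (ε μ : ℝ) (a u : ℝ → ℝ) (t : ℝ) : ℝ :=
  ε * deriv u t - μ * (a t * u t)

lemma hasDerivAt_flux {ε μ t : ℝ} {a b f u : ℝ → ℝ} (ha : DifferentiableAt ℝ a t)
    (hu : DifferentiableAt ℝ u t) (hu' : DifferentiableAt ℝ (deriv u) t)
    (hode : -ε * iteratedDeriv 2 u t + μ * a t * deriv u t + b t * u t = f t) :
    HasDerivAt (flux ε μ a u) ((b t - μ * deriv a t) * u t - f t) t := by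
  have h := (hu'.hasDerivAt.const_mul ε).sub ((ha.hasDerivAt.mul hu.hasDerivAt).const_mul μ)
  rw [iteratedDeriv_succ, iteratedDeriv_one] at hode
  exact h.congr_deriv (by linear_combination -hode)

lemma abs_sub_mul_mul_sub_le {μ b c v g B C V G : ℝ} (hμ : 0 ≤ μ) (hμ1 : μ ≤ 1)
    (hb : |b| ≤ B) (hc : |c| ≤ C) (hv : |v| ≤ V) (hg : |g| ≤ G) :
    |(b - μ * c) * v - g| ≤ (B + C) * V + G := by
  have hcoef : |b - μ * c| ≤ B + C :=
    calc |b - μ * c| ≤ |b| + μ * |c| := by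
          simpa [abs_mul, abs_of_nonneg hμ] using abs_sub b (μ * c)
      _ ≤ B + 1 * C := by gcongr
      _ = B + C := by ring
  calc |(b - μ * c) * v - g| ≤ |b - μ * c| * |v| + |g| := by
        simpa [abs_mul] using abs_sub ((b - μ * c) * v) g
    _ ≤ (B + C) * V + G :=
        add_le_add (mul_le_mul hcoef hv (abs_nonneg _) ((abs_nonneg _).trans hcoef)) hg

lemma abs_flux_sub_le {ε μ Ma' Mb Mu Mf x y : ℝ} {a b f u : ℝ → ℝ} (hμ : 0 ≤ μ) (hμ1 : μ ≤ 1)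
    (ha : ContDiff ℝ 1 a) (hu : ContDiff ℝ 2 u)
    (hMa' : ∀ t ∈ Icc (0 : ℝ) 1, |deriv a t| ≤ Ma') (hMb : ∀ t ∈ Icc (0 : ℝ) 1, |b t| ≤ Mb)
    (hode : ∀ t ∈ Ioo (0 : ℝ) 1,
      -ε * iteratedDeriv 2 u t + μ * a t * deriv u t + b t * u t = f t)
    (hMu : ∀ t ∈ Icc (0 : ℝ) 1, |u t| ≤ Mu) (hMf : ∀ t ∈ Icc (0 : ℝ) 1, |f t| ≤ Mf)
    (hx : x ∈ Icc (0 : ℝ) 1) (hy : y ∈ Icc (0 : ℝ) 1) :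
    |flux ε μ a u x - flux ε μ a u y| ≤ ((Mb + Ma') * Mu + Mf) * |x - y| := by
  have hud : Differentiable ℝ u := hu.differentiable (by norm_num)
  have hcont : Continuous (flux ε μ a u) :=
    (continuous_const.mul (hu.continuous_deriv (by norm_num))).sub
      (continuous_const.mul (ha.continuous.mul hud.continuous))
  refine abs_sub_le_of_hasDerivAt_of_abs_le hcont.continuousOn
    (fun t ht => hasDerivAt_flux (ha.differentiable one_ne_zero t) (hud t)
      (hu.differentiable_deriv_two t) (hode t ht))
    (fun t ht => ?_) hx hy
  have ht := Ioo_subset_Icc_self ht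
  exact abs_sub_mul_mul_sub_le hμ hμ1 (hMb t ht) (hMa' t ht) (hMu t ht) (hMf t ht)

lemma abs_deriv_le_of_ode {ε μ Ma Ma' Mb Mu Mf r x : ℝ} {a b f u : ℝ → ℝ} (hε : 0 < ε)
    (hμ : 0 ≤ μ) (hμ1 : μ ≤ 1) (ha : ContDiff ℝ 1 a) (hu : ContDiff ℝ 2 u)
    (hMa : ∀ t ∈ Icc (0 : ℝ) 1, |a t| ≤ Ma) (hMa' : ∀ t ∈ Icc (0 : ℝ) 1, |deriv a t| ≤ Ma')
    (hMb : ∀ t ∈ Icc (0 : ℝ) 1, |b t| ≤ Mb)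
    (hode : ∀ t ∈ Ioo (0 : ℝ) 1,
      -ε * iteratedDeriv 2 u t + μ * a t * deriv u t + b t * u t = f t)
    (hr : 0 < r) (hr1 : r ≤ 1) (hMu : ∀ t ∈ Icc (0 : ℝ) 1, |u t| ≤ Mu)
    (hMf : ∀ t ∈ Icc (0 : ℝ) 1, |f t| ≤ Mf) (hx : x ∈ Icc (0 : ℝ) 1) :
    |deriv u x| ≤ 2 * Mu / r + (2 * μ * Ma * Mu + ((Mb + Ma') * Mu + Mf) * r) / ε := by
  obtain ⟨α, hsub, hxα⟩ := exists_mem_Icc_add_subset_Icc hx hr.le (by simpa using hr1)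
  have hud : Differentiable ℝ u := hu.differentiable (by norm_num)
  obtain ⟨y, hyα, hy⟩ := exists_abs_deriv_le_of_abs_le (lt_add_of_pos_right α hr)
    hud.continuous.continuousOn hud.differentiableOn fun t ht => hMu t (hsub ht)
  rw [add_sub_cancel_left] at hy
  have hyI : y ∈ Icc α (α + r) := Ioo_subset_Icc_self hyα
  have hflux : |flux ε μ a u x - flux ε μ a u y| ≤ ((Mb + Ma') * Mu + Mf) * r := by
    refine (abs_flux_sub_le hμ hμ1 ha hu hMa' hMb hode hMu hMf hx (hsub hyI)).trans ?_
    have hK : 0 ≤ (Mb + Ma') * Mu + Mf := (abs_nonneg _).trans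
      (abs_sub_mul_mul_sub_le hμ hμ1 (hMb x hx) (hMa' x hx) (hMu x hx) (hMf x hx))
    gcongr
    exact abs_sub_le_iff.2 ⟨by linarith [hxα.2, hyI.1], by linarith [hxα.1, hyI.2]⟩
  have hau : ∀ t ∈ Icc (0 : ℝ) 1, |a t * u t| ≤ Ma * Mu := fun t ht => by
    rw [abs_mul]
    exact mul_le_mul (hMa t ht) (hMu t ht) (abs_nonneg _) ((abs_nonneg _).trans (hMa t ht))
  have hprod : |a x * u x - a y * u y| ≤ 2 * Ma * Mu := by
    linarith [abs_sub (a x * u x) (a y * u y), hau x hx, hau y (hsub hyI)]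
  have hsplit : ε * deriv u x
      = ε * deriv u y + (flux ε μ a u x - flux ε μ a u y) + μ * (a x * u x - a y * u y) := by
    unfold flux; ring
  have hscaled :
      ε * (|deriv u x| - 2 * Mu / r) ≤ 2 * μ * Ma * Mu + ((Mb + Ma') * Mu + Mf) * r := by
    have := abs_add_three (ε * deriv u y) (flux ε μ a u x - flux ε μ a u y)
      (μ * (a x * u x - a y * u y))
    rw [← hsplit, abs_mul, abs_mul, abs_mul, abs_of_pos hε, abs_of_nonneg hμ] at this
    have := mul_le_mul_of_nonneg_left hy hε.le
    have := mul_le_mul_of_nonneg_left hprod hμ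
    linarith
  linarith [(le_div_iff₀' hε).2 hscaled]

/-- Derivative bound for the two-parameter singularly perturbed ODE
`-ε u'' + μ a u' + b u = f` on (0,1): the constant depends only on the
sup norms of `a`, `a'` and `b`. -/
theorem deriv_bound_two_param (Ma Ma' Mb : ℝ) :
    ∃ C : ℝ, 0 < C ∧
    ∀ (ε μ : ℝ) (a b f u : ℝ → ℝ), 0 < ε → ε ≤ 1 → 0 ≤ μ → μ ≤ 1 →
      ContDiff ℝ 1 a → Continuous b → Continuous f → ContDiff ℝ 2 u →
      (∀ x ∈ Set.Icc (0 : ℝ) 1, |a x| ≤ Ma) →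
      (∀ x ∈ Set.Icc (0 : ℝ) 1, |deriv a x| ≤ Ma') →
      (∀ x ∈ Set.Icc (0 : ℝ) 1, |b x| ≤ Mb) →
      (∀ x ∈ Set.Ioo (0 : ℝ) 1,
        -ε * iteratedDeriv 2 u x + μ * a x * deriv u x + b x * u x = f x) →
      ∀ (r Mu Mf : ℝ), 0 < r → r ≤ 1 / 2 →
        (∀ x ∈ Set.Icc (0 : ℝ) 1, |u x| ≤ Mu) →
        (∀ x ∈ Set.Icc (0 : ℝ) 1, |f x| ≤ Mf) →
        ∀ x ∈ Set.Icc (0 : ℝ) 1,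
          |deriv u x| ≤ C * (1 / r + μ / ε + r / ε) * Mu + (r / ε) * Mf := by
  set C := 2 + 2 * |Ma| + |Ma'| + |Mb|
  refine ⟨C, by positivity, ?_⟩
  intro ε μ a b f u hε _ hμ hμ1 ha _ _ hu hMa hMa' hMb hode r Mu Mf hr hr2 hMu hMf x hx
  have hMu0 : 0 ≤ Mu := (abs_nonneg _).trans (hMu 0 ⟨le_rfl, zero_le_one⟩)
  have hrhs : C * (1 / r + μ / ε + r / ε) * Mu + r / ε * Mf
      = C * Mu / r + (C * μ * Mu + C * Mu * r + Mf * r) / ε := by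
    field_simp
    ring
  have hCMa : 2 * Ma ≤ C := by linarith [le_abs_self Ma, abs_nonneg Ma', abs_nonneg Mb]
  have hCMb : Mb + Ma' ≤ C := by linarith [le_abs_self Mb, le_abs_self Ma', abs_nonneg Ma]
  refine (abs_deriv_le_of_ode hε hμ hμ1 ha hu hMa hMa' hMb hode hr (by linarith) hMu hMf
    hx).trans ?_
  rw [hrhs]
  gcongr ?_ + ?_ / ε
  · gcongr
    linarith [abs_nonneg Ma, abs_nonneg Ma', abs_nonneg Mb]
  · linarith [mul_le_mul_of_nonneg_right hCMa (mul_nonneg hμ hMu0),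
      mul_le_mul_of_nonneg_right hCMb (mul_nonneg hMu0 hr.le)]
end

section
/- Let θ ≥ 1, ε > 0, α, γ > 0, 0 ≤ μ ≤ 1 satisfy θ ≥ α μ² / (γ ε) and let ρ_L = (1/2)√(γα/(θε)). If a, b are continuous functions with a(x) ≥ α and b(x) ≥ γ a(x), then for all x, -ε ρ_L² e^{-ρ_L x} - μ a(x) (-ρ_L) e^{-ρ_L x} + b(x) e^{-ρ_L x} ≥ 0; i.e., L_{ε,μ} applied to e^{-ρ_L x} is nonnegative. -/
/-- The exponential `e^{-ρ_L x}` is a barrier function for the left layer. -/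
theorem left_layer_barrier (θ ε α γ μ : ℝ)
    (hθ : 1 ≤ θ) (hε : 0 < ε) (hα : 0 < α) (hγ : 0 < γ)
    (hμ0 : 0 ≤ μ) (hμ1 : μ ≤ 1) (hθμ : α * μ ^ 2 / (γ * ε) ≤ θ)
    (a b : ℝ → ℝ) (ha : Continuous a) (hb : Continuous b)
    (haα : ∀ x, α ≤ a x) (hbγ : ∀ x, γ * a x ≤ b x) :
    ∀ x : ℝ,
      -ε * ((1 / 2) * Real.sqrt (γ * α / (θ * ε))) ^ 2
          * Real.exp (-((1 / 2) * Real.sqrt (γ * α / (θ * ε))) * x)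
        - μ * a x * (-((1 / 2) * Real.sqrt (γ * α / (θ * ε))))
          * Real.exp (-((1 / 2) * Real.sqrt (γ * α / (θ * ε))) * x)
        + b x * Real.exp (-((1 / 2) * Real.sqrt (γ * α / (θ * ε))) * x) ≥ 0 := by
  intro x
  set r : ℝ := (1 / 2) * Real.sqrt (γ * α / (θ * ε)) with hr
  have hθ0 : 0 < θ := lt_of_lt_of_le one_pos hθ
  have hq : (0:ℝ) ≤ γ * α / (θ * ε) :=
    div_nonneg (by positivity) (by positivity)
  have hsq : Real.sqrt (γ * α / (θ * ε)) ^ 2 = γ * α / (θ * ε) :=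
    Real.sq_sqrt hq
  have hr0 : 0 ≤ r := by positivity
  have hrsq : ε * r ^ 2 = γ * α / (4 * θ) := by
    rw [hr, mul_pow, hsq]
    field_simp
    ring
  have hE : 0 < Real.exp (-r * x) := Real.exp_pos _
  have key : -ε * r ^ 2 - μ * a x * (-r) + b x ≥ 0 := by
    have h1 : ε * r ^ 2 ≤ b x := by
      rw [hrsq]
      have : γ * α / (4 * θ) ≤ γ * α := by
        rw [div_le_iff₀ (by positivity)]
        nlinarith [mul_pos hγ hα]
      calc γ * α / (4 * θ) ≤ γ * α := this
        _ ≤ γ * a x := by nlinarith [haα x]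
        _ ≤ b x := hbγ x
    have h2 : 0 ≤ μ * a x * r := by
      have ha0 : (0:ℝ) ≤ a x := le_trans hα.le (haα x)
      positivity
    nlinarith
  have : (-ε * r ^ 2 - μ * a x * (-r) + b x) * Real.exp (-r * x) ≥ 0 :=
    mul_nonneg key hE.le
  nlinarith [this]
end

section
/- Let (x_i) be an arbitrary mesh 0 = x_0 < x_1 < ... < x_N = 1, with h_i = x_i - x_{i-1}, ħ_i = (h_i + h_{i+1})/2. Define D⁻Z_i = (Z_i - Z_{i-1})/h_i, D⁺Z_i = (Z_{i+1} - Z_i)/h_{i+1}, δ²Z_i = (D⁺Z_i - D⁻Z_i)/ħ_i, and δ̂²Z_i = (1/ħ_i)((h_{i+1}/h_i) D⁺Z_i - (ħ_i/ħ_{i-1}) D⁻Z_i). Then for any mesh function Z, δ̂²(D⁻Z)_i = D⁻(δ²Z)_i for all interior indices where both sides are defined. -/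
/-- Mesh step `h_i = x_i - x_{i-1}`. -/
noncomputable def meshH (x : ℕ → ℝ) (i : ℕ) : ℝ := x i - x (i - 1)

/-- Average step `ħ_i = (h_i + h_{i+1})/2`. -/
noncomputable def meshHbar (x : ℕ → ℝ) (i : ℕ) : ℝ := (meshH x i + meshH x (i + 1)) / 2

/-- Backward difference. -/
noncomputable def Dminus (x : ℕ → ℝ) (Z : ℕ → ℝ) (i : ℕ) : ℝ := (Z i - Z (i - 1)) / meshH x i

/-- Forward difference. -/
noncomputable def Dplus (x : ℕ → ℝ) (Z : ℕ → ℝ) (i : ℕ) : ℝ := (Z (i + 1) - Z i) / meshH x (i + 1)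

/-- Standard second difference `δ²`. -/
noncomputable def delta2 (x : ℕ → ℝ) (Z : ℕ → ℝ) (i : ℕ) : ℝ :=
  (Dplus x Z i - Dminus x Z i) / meshHbar x i

/-- Modified second difference `δ̂²`. -/
noncomputable def deltaHat2 (x : ℕ → ℝ) (Z : ℕ → ℝ) (i : ℕ) : ℝ :=
  (1 / meshHbar x i) * ((meshH x (i + 1) / meshH x i) * Dplus x Z i
    - (meshHbar x i / meshHbar x (i - 1)) * Dminus x Z i)

/-! With `W = D⁻Z`, the forward difference is the shifted backward difference, so
`δ²Z_i = (W_{i+1} - W_i)/ħ_i`. The weights `h_{i+1}/h_i` and `ħ_i/ħ_{i-1}` in `δ̂²` are exactly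
what cancels `h_{i+1}` and `ħ_i`, turning `δ̂²W_i` into the backward difference of that quotient. -/

theorem Dplus_eq_Dminus_succ (x Z : ℕ → ℝ) (i : ℕ) : Dplus x Z i = Dminus x Z (i + 1) := rfl

theorem delta2_eq_div (x Z : ℕ → ℝ) (i : ℕ) :
    delta2 x Z i = (Dminus x Z (i + 1) - Dminus x Z i) / meshHbar x i := by
  rw [delta2, Dplus_eq_Dminus_succ]

theorem deltaHat2_eq_div {x : ℕ → ℝ} {i : ℕ} (hh : meshH x (i + 1) ≠ 0)
    (hhbar : meshHbar x i ≠ 0) (W : ℕ → ℝ) :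
    deltaHat2 x W i =
      ((W (i + 1) - W i) / meshHbar x i - (W i - W (i - 1)) / meshHbar x (i - 1)) / meshH x i := by
  have hplus : meshH x (i + 1) / meshH x i * Dplus x W i = (W (i + 1) - W i) / meshH x i := by
    rw [Dplus, div_mul_div_comm, mul_comm (meshH x (i + 1)), mul_div_mul_right _ _ hh]
  have hminus : 1 / meshHbar x i * (meshHbar x i / meshHbar x (i - 1)) = 1 / meshHbar x (i - 1) := by
    rw [one_div_mul_eq_div, div_div_cancel_left' hhbar, one_div]
  rw [deltaHat2, hplus, mul_sub, ← mul_assoc, hminus, Dminus]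
  ring

theorem Dminus_delta2_eq_div (x Z : ℕ → ℝ) {i : ℕ} (hi : 1 ≤ i) :
    Dminus x (delta2 x Z) i =
      ((Dminus x Z (i + 1) - Dminus x Z i) / meshHbar x i
        - (Dminus x Z i - Dminus x Z (i - 1)) / meshHbar x (i - 1)) / meshH x i := by
  obtain ⟨j, rfl⟩ : ∃ j, i = j + 1 := ⟨i - 1, by omega⟩
  rw [Dminus, delta2_eq_div, delta2_eq_div, Nat.add_sub_cancel]

/-- On an arbitrary mesh, `δ̂² (D⁻ Z) = D⁻ (δ² Z)` at interior points. -/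
theorem deltaHat2_Dminus_comm (N : ℕ) (x : ℕ → ℝ)
    (hmesh : ∀ i, i < N → x i < x (i + 1)) (Z : ℕ → ℝ) :
    ∀ i, 2 ≤ i → i + 1 ≤ N →
      deltaHat2 x (Dminus x Z) i = Dminus x (delta2 x Z) i := by
  intro i hi hN
  have hright : 0 < meshH x (i + 1) := sub_pos.mpr (hmesh i (by omega))
  have hleft : 0 < meshH x i := by
    obtain ⟨j, rfl⟩ : ∃ j, i = j + 1 := ⟨i - 1, by omega⟩
    exact sub_pos.mpr (hmesh j (by omega))
  have hhbar : 0 < meshHbar x i := by unfold meshHbar; positivity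
  rw [deltaHat2_eq_div hright.ne' hhbar.ne', Dminus_delta2_eq_div x Z (by omega)]
end

section
/- Let y ∈ C²[x_{i-2}, x_i] with mesh steps h_{i-1} = x_{i-1} - x_{i-2}, h_i = x_i - x_{i-1}. Then |D⁻(y' - D⁻y)(x_i)| ≤ C (1 + h_{i-1}/h_i) sup_{[x_{i-2},x_i]} |y''| for an absolute constant C, where D⁻ is the backward difference. Moreover, if h_{i-1} = h_i and y ∈ C³, then |D⁻(y' - D⁻y)(x_i)| ≤ C h_i sup_{[x_{i-2},x_i]} |y'''|. -/
/-!
Write `E(a, b) = y'(b) - D⁻y(b) = y'(b) - (y b - y a)/(b - a)` for the truncation error on the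
cell `[a, b]`. For `G t = y t - y'(b) t` one has `G' = y' - y'(b) = O(M (b - a))` on `[a, b]`, so
`E(a, b) = (G a - G b)/(b - a) = O(M (b - a))`; summing the errors on `[q, r]` and `[p, q]` gives
the first estimate. The same bound applied to `F t = y t - y''(b)/2 (t - b)²`, whose truncation
error is `E(a, b) - (b - a)/2 y''(b)` and whose second derivative `y'' - y''(b)` is
`O(M₃ (b - a))`, gives `E(a, b) = (b - a)/2 y''(b) + O(M₃ (b - a)²)`. On a uniform mesh the
leading terms of `E(q, r) - E(p, q)` combine to `h/2 (y''(r) - y''(q)) = O(M₃ h²)`.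
-/

open Set

noncomputable section

def backwardTruncation (y y' : ℝ → ℝ) (a b : ℝ) : ℝ :=
  y' b - (y b - y a) / (b - a)

theorem forall_hasDerivWithinAt_mono {𝕜 F : Type*} [NontriviallyNormedField 𝕜]
    [NormedAddCommGroup F] [NormedSpace 𝕜 F] {f f' : 𝕜 → F} {s u : Set 𝕜}
    (hf : ∀ t ∈ s, HasDerivWithinAt f (f' t) s t) (hu : u ⊆ s) :
    ∀ t ∈ u, HasDerivWithinAt f (f' t) u t :=
  fun t ht => (hf t (hu ht)).mono hu

theorem ContDiffOn.hasDerivWithinAt_iteratedDerivWithin {f : ℝ → ℝ} {s : Set ℝ} {k : WithTop ℕ∞}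
    {n : ℕ} (hf : ContDiffOn ℝ k f s) (hn : (n : WithTop ℕ∞) < k) (hs : UniqueDiffOn ℝ s) :
    ∀ t ∈ s, HasDerivWithinAt (iteratedDerivWithin n f s)
      (iteratedDerivWithin (n + 1) f s t) s t := fun t ht => by
  rw [iteratedDerivWithin_succ]
  exact ((hf.differentiableOn_iteratedDerivWithin hn hs) t ht).hasDerivWithinAt

section Interval

variable {y y' y'' y''' : ℝ → ℝ} {a b M : ℝ}

theorem abs_sub_right_le_of_forall_abs_deriv_le {f f' : ℝ → ℝ} {t : ℝ}
    (hf : ∀ x ∈ Icc a b, HasDerivWithinAt f (f' x) (Icc a b) x)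
    (hM : ∀ x ∈ Icc a b, |f' x| ≤ M) (ht : t ∈ Icc a b) :
    |f t - f b| ≤ M * (b - a) := by
  have hb : b ∈ Icc a b := right_mem_Icc.2 (ht.1.trans ht.2)
  have hM0 : 0 ≤ M := (abs_nonneg _).trans (hM b hb)
  have h := (convex_Icc a b).norm_image_sub_le_of_norm_hasDerivWithin_le hf hM hb ht
  rw [Real.norm_eq_abs, Real.norm_eq_abs, abs_sub_comm t, abs_of_nonneg (sub_nonneg.2 ht.2)] at h
  exact h.trans (mul_le_mul_of_nonneg_left (by linarith [ht.1]) hM0)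

theorem abs_backwardTruncation_le (hab : a < b)
    (hy : ∀ t ∈ Icc a b, HasDerivWithinAt y (y' t) (Icc a b) t)
    (hy' : ∀ t ∈ Icc a b, HasDerivWithinAt y' (y'' t) (Icc a b) t)
    (hM : ∀ t ∈ Icc a b, |y'' t| ≤ M) :
    |backwardTruncation y y' a b| ≤ M * (b - a) := by
  have hG : ∀ t ∈ Icc a b,
      HasDerivWithinAt (fun t => y t - y' b * t) (y' t - y' b) (Icc a b) t := fun t ht => by
    simpa using (hy t ht).fun_sub ((hasDerivWithinAt_id t _).const_mul (y' b))
  have hGa := abs_sub_right_le_of_forall_abs_deriv_le hG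
    (fun t ht => abs_sub_right_le_of_forall_abs_deriv_le hy' hM ht) (left_mem_Icc.2 hab.le)
  have hba : 0 < b - a := sub_pos.2 hab
  have hE : backwardTruncation y y' a b = (y a - y' b * a - (y b - y' b * b)) / (b - a) := by
    unfold backwardTruncation
    field_simp
    ring
  rwa [hE, abs_div, abs_of_pos hba, div_le_iff₀ hba]

theorem abs_backwardTruncation_sub_le (hab : a < b)
    (hy : ∀ t ∈ Icc a b, HasDerivWithinAt y (y' t) (Icc a b) t)
    (hy' : ∀ t ∈ Icc a b, HasDerivWithinAt y' (y'' t) (Icc a b) t)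
    (hy'' : ∀ t ∈ Icc a b, HasDerivWithinAt y'' (y''' t) (Icc a b) t)
    (hM : ∀ t ∈ Icc a b, |y''' t| ≤ M) :
    |backwardTruncation y y' a b - (b - a) / 2 * y'' b| ≤ M * (b - a) ^ 2 := by
  have hF : ∀ t ∈ Icc a b, HasDerivWithinAt (fun t => y t - y'' b / 2 * (t - b) ^ 2)
      (y' t - y'' b * (t - b)) (Icc a b) t := fun t ht => by
    refine ((hy t ht).fun_sub
      ((((hasDerivWithinAt_id t _).sub_const b).fun_pow 2).const_mul (y'' b / 2))).congr_deriv ?_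
    simp only [id, Nat.cast_ofNat, Nat.add_one_sub_one, pow_one]
    ring
  have hF' : ∀ t ∈ Icc a b, HasDerivWithinAt (fun t => y' t - y'' b * (t - b))
      (y'' t - y'' b) (Icc a b) t := fun t ht => by
    simpa using (hy' t ht).fun_sub (((hasDerivWithinAt_id t _).sub_const b).const_mul (y'' b))
  have h := abs_backwardTruncation_le hab hF hF'
    (fun t ht => abs_sub_right_le_of_forall_abs_deriv_le hy'' hM ht)
  rw [sq, ← mul_assoc]
  convert h using 2
  unfold backwardTruncation
  field_simp [(sub_pos.2 hab).ne']
  ring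

end Interval

section ThreePoint

variable {y y' y'' y''' : ℝ → ℝ} {p q r M : ℝ}

theorem abs_backwardTruncation_sub_backwardTruncation_le (hpq : p < q) (hqr : q < r)
    (hy : ∀ t ∈ Icc p r, HasDerivWithinAt y (y' t) (Icc p r) t)
    (hy' : ∀ t ∈ Icc p r, HasDerivWithinAt y' (y'' t) (Icc p r) t)
    (hM : ∀ t ∈ Icc p r, |y'' t| ≤ M) :
    |backwardTruncation y y' q r - backwardTruncation y y' p q| ≤ M * (r - p) := by
  have hqr_sub : Icc q r ⊆ Icc p r := Icc_subset_Icc_left hpq.le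
  have hpq_sub : Icc p q ⊆ Icc p r := Icc_subset_Icc_right hqr.le
  have hEr := abs_backwardTruncation_le hqr (forall_hasDerivWithinAt_mono hy hqr_sub)
    (forall_hasDerivWithinAt_mono hy' hqr_sub) (fun t ht => hM t (hqr_sub ht))
  have hEq := abs_backwardTruncation_le hpq (forall_hasDerivWithinAt_mono hy hpq_sub)
    (forall_hasDerivWithinAt_mono hy' hpq_sub) (fun t ht => hM t (hpq_sub ht))
  calc _ ≤ |backwardTruncation y y' q r| + |backwardTruncation y y' p q| := abs_sub _ _
    _ ≤ M * (r - q) + M * (q - p) := add_le_add hEr hEq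
    _ = M * (r - p) := by ring

theorem abs_backwardTruncation_sub_backwardTruncation_le_of_uniform (hpq : p < q) (hqr : q < r)
    (hh : q - p = r - q)
    (hy : ∀ t ∈ Icc p r, HasDerivWithinAt y (y' t) (Icc p r) t)
    (hy' : ∀ t ∈ Icc p r, HasDerivWithinAt y' (y'' t) (Icc p r) t)
    (hy'' : ∀ t ∈ Icc p r, HasDerivWithinAt y'' (y''' t) (Icc p r) t)
    (hM : ∀ t ∈ Icc p r, |y''' t| ≤ M) :
    |backwardTruncation y y' q r - backwardTruncation y y' p q| ≤ 5 / 2 * M * (r - q) ^ 2 := by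
  have hqr_sub : Icc q r ⊆ Icc p r := Icc_subset_Icc_left hpq.le
  have hpq_sub : Icc p q ⊆ Icc p r := Icc_subset_Icc_right hqr.le
  have hEr := abs_backwardTruncation_sub_le hqr (forall_hasDerivWithinAt_mono hy hqr_sub)
    (forall_hasDerivWithinAt_mono hy' hqr_sub) (forall_hasDerivWithinAt_mono hy'' hqr_sub)
    (fun t ht => hM t (hqr_sub ht))
  have hEq := abs_backwardTruncation_sub_le hpq (forall_hasDerivWithinAt_mono hy hpq_sub)
    (forall_hasDerivWithinAt_mono hy' hpq_sub) (forall_hasDerivWithinAt_mono hy'' hpq_sub)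
    (fun t ht => hM t (hpq_sub ht))
  have hy''_diff := abs_sub_right_le_of_forall_abs_deriv_le
    (forall_hasDerivWithinAt_mono hy'' hqr_sub) (fun t ht => hM t (hqr_sub ht))
    (left_mem_Icc.2 hqr.le)
  rw [hh] at hEq
  have hh0 : 0 ≤ (r - q) / 2 := by linarith
  calc _ = |(backwardTruncation y y' q r - (r - q) / 2 * y'' r)
        - (backwardTruncation y y' p q - (r - q) / 2 * y'' q)
        - (r - q) / 2 * (y'' q - y'' r)| := by congr 1; ring
    _ ≤ M * (r - q) ^ 2 + M * (r - q) ^ 2 + (r - q) / 2 * (M * (r - q)) := by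
      refine (abs_sub _ _).trans (add_le_add ((abs_sub _ _).trans (add_le_add hEr hEq)) ?_)
      rw [abs_mul, abs_of_nonneg hh0]
      exact mul_le_mul_of_nonneg_left hy''_diff hh0
    _ = 5 / 2 * M * (r - q) ^ 2 := by ring

end ThreePoint

end

/-- Consistency estimate for the backward difference of the flux truncation error.
Nodes `p < q < r` with `h_{i-1} = q - p`, `h_i = r - q`;
`E(x_i) = y'(x_i) - D⁻y(x_i)` and the bound is on `D⁻E(x_i) = (E(r)-E(q))/h_i`. -/
theorem Dminus_flux_truncation :
    ∃ C : ℝ, 0 < C ∧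
    ∀ (y : ℝ → ℝ) (p q r : ℝ), p < q → q < r →
      (ContDiffOn ℝ 2 y (Set.Icc p r) →
        ∀ M : ℝ, (∀ s ∈ Set.Icc p r, |iteratedDerivWithin 2 y (Set.Icc p r) s| ≤ M) →
          |((derivWithin y (Set.Icc p r) r - (y r - y q) / (r - q))
              - (derivWithin y (Set.Icc p r) q - (y q - y p) / (q - p))) / (r - q)|
            ≤ C * (1 + (q - p) / (r - q)) * M) ∧
      (q - p = r - q → ContDiffOn ℝ 3 y (Set.Icc p r) →
        ∀ M3 : ℝ, (∀ s ∈ Set.Icc p r, |iteratedDerivWithin 3 y (Set.Icc p r) s| ≤ M3) →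
          |((derivWithin y (Set.Icc p r) r - (y r - y q) / (r - q))
              - (derivWithin y (Set.Icc p r) q - (y q - y p) / (q - p))) / (r - q)|
            ≤ C * (r - q) * M3) := by
  refine ⟨5 / 2, by norm_num, fun y p q r hpq hqr => ⟨fun hy M hM => ?_, fun hh hy M3 hM3 => ?_⟩⟩
  all_goals
    have hs : UniqueDiffOn ℝ (Icc p r) := uniqueDiffOn_Icc (hpq.trans hqr)
    have hrq : 0 < r - q := sub_pos.2 hqr
    have hy₀ := hy.hasDerivWithinAt_iteratedDerivWithin (n := 0) (by norm_num) hs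
    have hy₁ := hy.hasDerivWithinAt_iteratedDerivWithin (n := 1) (by norm_num) hs
    simp only [iteratedDerivWithin_zero, iteratedDerivWithin_one, zero_add, Nat.reduceAdd] at hy₀ hy₁
    rw [abs_div, abs_of_pos hrq, div_le_iff₀ hrq]
  · have hM0 : 0 ≤ M := (abs_nonneg _).trans (hM r (right_mem_Icc.2 (hpq.trans hqr).le))
    calc _ ≤ M * (r - p) := abs_backwardTruncation_sub_backwardTruncation_le hpq hqr hy₀ hy₁ hM
      _ ≤ 5 / 2 * (1 + (q - p) / (r - q)) * M * (r - q) := by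
        rw [one_add_div hrq.ne']
        field_simp
        nlinarith [mul_nonneg hM0 (sub_pos.2 (hpq.trans hqr)).le]
  · have hy₂ := hy.hasDerivWithinAt_iteratedDerivWithin (n := 2) (by norm_num) hs
    calc _ ≤ 5 / 2 * M3 * (r - q) ^ 2 :=
          abs_backwardTruncation_sub_backwardTruncation_le_of_uniform hpq hqr hh hy₀ hy₁ hy₂ hM3
      _ = 5 / 2 * (r - q) * M3 * (r - q) := by ring
end

section
/- Let ρ > 0, N a positive multiple of 4, and define ψ(x_i) = (1 - (1+ρ)^{i-N}) / (1 - (1+ρ)^{-N/4}) for i = 3N/4, ..., N. Then ψ solves the discrete two-point problem -ε δ²ψ(x_i) + √(εθ) A D⁻ψ(x_i) = 0 on a uniform mesh of step h_R with ρ = √(θ/ε) A h_R, ψ at the left endpoint equal to 1, ψ(x_N) = 0; moreover D⁻ψ(x_i) < 0 for all i, and (1+ρ)^{-N/4} ≤ C N^{-1} when (1+ρ)^{N/4} ≥ N, in particular when ρ ≥ 4 ln N / N. -/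
/-- The discrete boundary-layer profile `ψ_i = (1-(1+ρ)^{i-N})/(1-(1+ρ)^{-N/4})`
on a uniform mesh of step `h_R` on the last quarter of the mesh, with `N = 4m`:
it solves `-ε δ²ψ + √(εθ) A D⁻ψ = 0`, has the stated boundary values, has
negative backward differences, and is small at the transition point. -/
theorem discrete_layer_profile (ε θ A hR : ℝ) (hε : 0 < ε) (hθ : 0 < θ)
    (hA : 0 < A) (hhR : 0 < hR) (m : ℕ) (hm : 0 < m)
    (ρ : ℝ) (hρ : ρ = Real.sqrt (θ / ε) * A * hR)
    (ψ : ℕ → ℝ)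
    (hψ : ∀ i : ℕ, ψ i = (1 - (1 + ρ) ^ ((i : ℤ) - 4 * m))
        / (1 - (1 + ρ) ^ (-(m : ℤ)))) :
    (∀ i : ℕ, 3 * m < i → i < 4 * m →
      -ε * ((ψ (i + 1) - 2 * ψ i + ψ (i - 1)) / hR ^ 2)
        + Real.sqrt (ε * θ) * A * ((ψ i - ψ (i - 1)) / hR) = 0) ∧
    ψ (3 * m) = 1 ∧ ψ (4 * m) = 0 ∧
    (∀ i : ℕ, 3 * m < i → i ≤ 4 * m → (ψ i - ψ (i - 1)) / hR < 0) ∧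
    ((4 * m : ℝ) ≤ (1 + ρ) ^ (m : ℕ) →
      (1 + ρ) ^ (-(m : ℤ)) ≤ ((4 * m : ℝ))⁻¹) := by
  have ht : 0 < Real.sqrt (θ / ε) := Real.sqrt_pos.2 (div_pos hθ hε)
  have hρ0 : 0 < ρ := by rw [hρ]; positivity
  have hq1 : (1:ℝ) < 1 + ρ := by linarith
  have hq0 : (0:ℝ) < 1 + ρ := by linarith
  have hqne : (1:ℝ) + ρ ≠ 0 := hq0.ne'
  have hqm : (1:ℝ) < (1 + ρ) ^ m := one_lt_pow₀ hq1 hm.ne'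
  have hinv : (1 + ρ) ^ (-(m:ℤ)) = ((1 + ρ) ^ m)⁻¹ := by
    rw [zpow_neg, zpow_natCast]
  have hD : 0 < 1 - (1 + ρ) ^ (-(m:ℤ)) := by
    rw [hinv]
    have : ((1 + ρ) ^ m)⁻¹ < 1 := inv_lt_one_of_one_lt₀ hqm
    linarith
  have hDne : 1 - (1 + ρ) ^ (-(m:ℤ)) ≠ 0 := hD.ne'
  have hsqrt : Real.sqrt (ε * θ) = ε * Real.sqrt (θ / ε) := by
    rw [Real.sqrt_mul hε.le, Real.sqrt_div hθ.le]
    have hseε : Real.sqrt ε ≠ 0 := (Real.sqrt_pos.2 hε).ne'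
    field_simp
    nlinarith [Real.mul_self_sqrt hε.le, Real.sqrt_nonneg ε, Real.sqrt_nonneg θ]
  set t := Real.sqrt (θ / ε) with htdef
  subst hρ
  refine ⟨?_, ?_, ?_, ?_, ?_⟩
  · intro i h3 h4
    have hi1 : 1 ≤ i := by omega
    have e1 : ((i+1:ℕ):ℤ) - 4*m = ((i:ℤ) - 4*m) + 1 := by push_cast; ring
    have e2 : ((i-1:ℕ):ℤ) - 4*m = ((i:ℤ) - 4*m) - 1 := by omega
    rw [hψ (i+1), hψ i, hψ (i-1), e1, e2,
      zpow_add_one₀ hqne, zpow_sub_one₀ hqne, hsqrt]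
    set Dv := 1 - (1 + t * A * hR) ^ (-(m:ℤ)) with hDv
    set s := (1 + t * A * hR) ^ ((i:ℤ) - 4*m) with hsdef
    field_simp
    ring
  · rw [hψ]
    have : ((3*m:ℕ):ℤ) - 4*m = -(m:ℤ) := by push_cast; ring
    rw [this, div_self hDne]
  · rw [hψ]
    have : ((4*m:ℕ):ℤ) - 4*m = 0 := by push_cast; ring
    rw [this, zpow_zero, sub_self, zero_div]
  · intro i h3 h4
    have hi1 : 1 ≤ i := by omega
    have e2 : ((i-1:ℕ):ℤ) = (i:ℤ) - 1 := by omega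
    apply div_neg_of_neg_of_pos _ hhR
    rw [hψ i, hψ (i-1), e2, div_sub_div_same]
    apply div_neg_of_neg_of_pos _ hD
    have : (1 + t * A * hR) ^ ((i:ℤ) - 1 - 4*m) < (1 + t * A * hR) ^ ((i:ℤ) - 4*m) :=
      zpow_lt_zpow_right₀ hq1 (by omega)
    linarith
  · intro h
    rw [hinv]
    have h4m : (0:ℝ) < 4 * m := by positivity
    exact inv_anti₀ h4m h
end
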